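/- arXiv:2506.05192 — 2 statements merged into one kernel-verified Lean document; each statement's English description precedes it below -/
import Mathlib

section
/- For a reachability objective in the optimistic backward responsibility setting, all states with positive responsibility have the same responsibility value; formally, there exists a rational r ∈ [0,1] such that the optimistic responsibility of every state lies in {0, r}. -/
/-- The engraving construction: all transitions of states on the run `ρ` that are not
in the coalition `C` are removed, except the one following `ρ`. -/
def Engrave {S : Type*} (tr : S → S → Prop) (ρ : ℕ → S) (C : Set S) : S → S → Prop :=
  fun s t => (tr s t ∧ ¬(s ∈ Set.range ρ ∧ s ∉ C)) ∨ ∃ i, ρ i = s ∧ ρ (i + 1) = t ∧ s ∉ C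

/-- Player Sat (with positional strategies, controlling the states in `C`)
wins the game on arena `tr` with objective `Ω` from state `init`. -/
def Wins {S : Type*} (tr : S → S → Prop) (C : Set S) (Ω : (ℕ → S) → Prop) (init : S) : Prop :=
  ∃ σ : S → S, (∀ s, tr s (σ s)) ∧
    ∀ π : ℕ → S, π 0 = init →
      (∀ i, tr (π i) (π (i + 1)) ∧ (π i ∈ C → π (i + 1) = σ (π i))) → Ω π

/-- A run is simple lasso-shaped. -/
def SimpleLasso {S : Type*} (ρ : ℕ → S) : Prop :=
  ∃ k ℓ : ℕ, 0 < ℓ ∧ (∀ i, k ≤ i → ρ (i + ℓ) = ρ i) ∧ Set.InjOn ρ (Set.Iio (k + ℓ))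

def SafetyObj {S : Type*} (F : Set S) : (ℕ → S) → Prop := fun π => ∀ i, π i ∉ F

def ReachObj {S : Type*} (F : Set S) : (ℕ → S) → Prop := fun π => ∃ i, π i ∈ F

def BuchiObj {S : Type*} (F : Set S) : (ℕ → S) → Prop := fun π => ∀ i, ∃ j, i ≤ j ∧ π j ∈ F

/-- The Shapley value of agent `a` in the cooperative game `γ`. -/
noncomputable def shapley {α : Type*} [Fintype α] [DecidableEq α]
    (γ : Finset α → ℚ) (a : α) : ℚ :=
  ∑ C ∈ (Finset.univ.erase a).powerset,
    (((Fintype.card α - C.card - 1).factorial * C.card.factorial : ℚ) /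
      ((Fintype.card α).factorial : ℚ)) * (γ (insert a C) - γ C)

/-! In the engraved game the states of the run outside the coalition have, by the lasso shape,
a single successor, so Sat wins exactly when `F` is reachable in the engraved graph. Since `F`
avoids the run, such a path leaves the run at a coalition state, and from the last coalition
state `s` it visits on the run it is a path of the game engraved for `{s}` alone. So `γ C = 1`
iff `C` meets the set `R` of singleton-winning states; in this game every state outside `R` is a
null player, and every state of `R` gets the same value
`∑_{C ⊆ S \ R} shapleyWeight |S| |C|`. -/

open Finset Relation

def shapleyWeight (n k : ℕ) : ℚ := ((n - k - 1).factorial * k.factorial : ℚ) / (n.factorial : ℚ)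

section Shapley

variable {α : Type*} [Fintype α] [DecidableEq α]

theorem shapley_eq_sum_shapleyWeight (γ : Finset α → ℚ) (a : α) :
    shapley γ a = ∑ C ∈ (univ.erase a).powerset,
      shapleyWeight (Fintype.card α) C.card * (γ (insert a C) - γ C) := rfl

theorem shapleyWeight_nonneg (n k : ℕ) : 0 ≤ shapleyWeight n k := by
  unfold shapleyWeight; positivity

theorem sum_shapleyWeight_powerset_erase (a : α) :
    ∑ C ∈ (univ.erase a).powerset, shapleyWeight (Fintype.card α) C.card = 1 := by
  obtain ⟨m, hm⟩ : ∃ m, Fintype.card α = m + 1 :=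
    Nat.exists_eq_add_one.mpr (Fintype.card_pos_iff.mpr ⟨a⟩)
  have hcard : (univ.erase a).card = m := by simp [hm]
  rw [sum_powerset_apply_card _, hcard, hm]
  have hterm : ∀ k ∈ range (m + 1), m.choose k • shapleyWeight (m + 1) k = 1 / (m + 1) := by
    intro k hk
    have hkm : k ≤ m := Nat.lt_succ_iff.mp (mem_range.mp hk)
    rw [nsmul_eq_mul, shapleyWeight, Nat.cast_choose ℚ hkm, Nat.factorial_succ,
      show m + 1 - k - 1 = m - k by omega]
    push_cast
    field_simp
  rw [sum_congr rfl hterm, sum_const, card_range, nsmul_eq_mul]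
  push_cast
  field_simp

theorem shapley_eq_zero_of_null {γ : Finset α → ℚ} {a : α}
    (h : ∀ C, γ (insert a C) = γ C) : shapley γ a = 0 := by
  simp [shapley_eq_sum_shapleyWeight, h]

theorem shapley_mem_Icc_of_marginal_mem_Icc {γ : Finset α → ℚ} {a : α}
    (h : ∀ C, γ (insert a C) - γ C ∈ Set.Icc 0 1) : shapley γ a ∈ Set.Icc 0 1 := by
  rw [shapley_eq_sum_shapleyWeight]
  refine ⟨sum_nonneg fun C _ => mul_nonneg (shapleyWeight_nonneg _ _) (h C).1, ?_⟩
  calc _ ≤ ∑ C ∈ (univ.erase a).powerset, shapleyWeight (Fintype.card α) C.card :=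
        sum_le_sum fun C _ => mul_le_of_le_one_right (shapleyWeight_nonneg _ _) (h C).2
    _ = 1 := sum_shapleyWeight_powerset_erase a

theorem shapley_eq_sum_of_mem_of_eq_ite_disjoint {γ : Finset α → ℚ} {R : Finset α}
    (hγ : ∀ C, γ C = if Disjoint C R then 0 else 1) {a : α} (ha : a ∈ R) :
    shapley γ a = ∑ C ∈ (univ \ R).powerset, shapleyWeight (Fintype.card α) C.card := by
  have hins : ∀ C, γ (insert a C) = 1 := fun C => by
    rw [hγ, if_neg (not_disjoint_iff.mpr ⟨a, mem_insert_self a C, ha⟩)]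
  have hfilter : {C ∈ (univ.erase a).powerset | Disjoint C R} = (univ \ R).powerset := by
    ext C
    simp only [mem_filter, mem_powerset, subset_sdiff, subset_univ, true_and]
    refine ⟨And.right, fun h => ⟨fun x hx => mem_erase.mpr ⟨fun hxa => ?_, mem_univ x⟩, h⟩⟩
    exact disjoint_left.mp h hx (hxa ▸ ha)
  rw [shapley_eq_sum_shapleyWeight, ← hfilter, sum_filter]
  refine sum_congr rfl fun C _ => ?_
  rw [hins, hγ C]
  split_ifs <;> simp

theorem shapley_eq_zero_of_notMem_of_eq_ite_disjoint {γ : Finset α → ℚ} {R : Finset α}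
    (hγ : ∀ C, γ C = if Disjoint C R then 0 else 1) {a : α} (ha : a ∉ R) : shapley γ a = 0 :=
  shapley_eq_zero_of_null fun C => by
    simp only [hγ, disjoint_insert_left, ha, not_false_eq_true, true_and]

theorem exists_shapley_eq_zero_or_eq_of_iff_exists_singleton {γ : Finset α → ℚ}
    (hγ01 : ∀ C, γ C = 0 ∨ γ C = 1) (hγ : ∀ C, γ C = 1 ↔ ∃ s ∈ C, γ {s} = 1) :
    ∃ r : ℚ, 0 ≤ r ∧ r ≤ 1 ∧ ∀ a, shapley γ a = 0 ∨ shapley γ a = r := by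
  obtain ⟨R, hR⟩ : ∃ R : Finset α, ∀ s, s ∈ R ↔ γ {s} = 1 :=
    ⟨univ.filter fun s => γ {s} = 1, by simp⟩
  have hγR : ∀ C, γ C = if Disjoint C R then 0 else 1 := by
    intro C
    have hiff : γ C = 1 ↔ ¬Disjoint C R := by rw [hγ, not_disjoint_iff]; simp only [hR]
    split_ifs with hCR
    · exact (hγ01 C).resolve_right (hiff.not.mpr (not_not.mpr hCR))
    · exact hiff.mpr hCR
  by_cases hRne : R.Nonempty
  · obtain ⟨a₀, ha₀⟩ := hRne
    have hmarg : ∀ C, γ (insert a₀ C) - γ C ∈ Set.Icc 0 1 := fun C => by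
      rw [hγR, hγR C, if_neg (not_disjoint_iff.mpr ⟨a₀, mem_insert_self a₀ C, ha₀⟩)]
      split_ifs <;> norm_num
    obtain ⟨hr0, hr1⟩ := shapley_mem_Icc_of_marginal_mem_Icc hmarg
    refine ⟨shapley γ a₀, hr0, hr1, fun a => ?_⟩
    by_cases ha : a ∈ R
    · exact Or.inr (by rw [shapley_eq_sum_of_mem_of_eq_ite_disjoint hγR ha,
        shapley_eq_sum_of_mem_of_eq_ite_disjoint hγR ha₀])
    · exact Or.inl (shapley_eq_zero_of_notMem_of_eq_ite_disjoint hγR ha)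
  · refine ⟨0, le_rfl, zero_le_one, fun a => Or.inl ?_⟩
    exact shapley_eq_zero_of_notMem_of_eq_ite_disjoint hγR fun ha => hRne ⟨a, ha⟩

end Shapley

section Reachability

variable {S : Type*} {E : S → S → Prop} {Ctrl F : Set S} {init : S}

def stepsTo (E : S → S → Prop) (F : Set S) : ℕ → Set S
  | 0 => F
  | n + 1 => {s | ∃ t, E s t ∧ t ∈ stepsTo E F n}

theorem exists_mem_stepsTo_of_reflTransGen {s f : S} (hf : f ∈ F) (h : ReflTransGen E s f) :
    ∃ n, s ∈ stepsTo E F n := by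
  induction h using ReflTransGen.head_induction_on with
  | refl => exact ⟨0, hf⟩
  | head hst _ ih =>
    obtain ⟨n, hn⟩ := ih
    exact ⟨n + 1, _, hst, hn⟩

theorem exists_step_toward_stepsTo (hE : ∀ s, ∃ t, E s t) (s : S) :
    ∃ t, E s t ∧ ∀ n, s ∈ stepsTo E F (n + 1) → ∃ m ≤ n, t ∈ stepsTo E F m := by
  classical
  by_cases h : ∃ n, s ∈ stepsTo E F (n + 1)
  · obtain ⟨t, hst, ht⟩ := Nat.find_spec h
    exact ⟨t, hst, fun n hn => ⟨_, Nat.find_min' h hn, ht⟩⟩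
  · obtain ⟨t, hst⟩ := hE s
    exact ⟨t, hst, fun n hn => absurd ⟨n, hn⟩ h⟩

theorem reflTransGen_of_wins_reachObj (h : Wins E Ctrl (ReachObj F) init) :
    ∃ f ∈ F, ReflTransGen E init f := by
  obtain ⟨σ, hσ, hwin⟩ := h
  have hplay : ∀ i, E (σ^[i] init) (σ^[i + 1] init) := fun i => by
    rw [Function.iterate_succ_apply']; exact hσ _
  obtain ⟨m, hm⟩ := hwin (fun i => σ^[i] init) rfl fun i =>
    ⟨hplay i, fun _ => Function.iterate_succ_apply' σ i init⟩
  refine ⟨_, hm, ?_⟩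
  clear hm
  induction m with
  | zero => exact .refl
  | succ m ih => exact ih.tail (hplay m)

theorem wins_reachObj_of_reflTransGen (hE : ∀ s, ∃ t, E s t)
    (hdet : ∀ s ∉ Ctrl, ∀ t t', E s t → E s t' → t = t') {f : S} (hf : f ∈ F)
    (h : ReflTransGen E init f) : Wins E Ctrl (ReachObj F) init := by
  choose σ hσE hσ using exists_step_toward_stepsTo (F := F) hE
  refine ⟨σ, hσE, fun π hπ0 hπ => ?_⟩
  obtain ⟨n, hn⟩ := exists_mem_stepsTo_of_reflTransGen hf h
  rw [← hπ0] at hn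
  suffices ∀ n i, π i ∈ stepsTo E F n → ∃ j, π j ∈ F from this n 0 hn
  intro n
  induction n using Nat.strong_induction_on with
  | _ n ih =>
    intro i hi
    match n, hi with
    | 0, hi => exact ⟨i, hi⟩
    | n + 1, hi =>
      by_cases hc : π i ∈ Ctrl
      · obtain ⟨m, hmn, hm⟩ := hσ _ n hi
        exact ih m (by omega) (i + 1) ((hπ i).2 hc ▸ hm)
      · obtain ⟨t, hit, ht⟩ := hi
        exact ih n (by omega) (i + 1) (hdet _ hc _ _ (hπ i).1 hit ▸ ht)

theorem wins_reachObj_iff_reflTransGen (hE : ∀ s, ∃ t, E s t)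
    (hdet : ∀ s ∉ Ctrl, ∀ t t', E s t → E s t' → t = t') :
    Wins E Ctrl (ReachObj F) init ↔ ∃ f ∈ F, ReflTransGen E init f :=
  ⟨reflTransGen_of_wins_reachObj, fun ⟨_, hf, h⟩ => wins_reachObj_of_reflTransGen hE hdet hf h⟩

end Reachability

section Engraving

variable {S : Type*} {tr : S → S → Prop} {ρ : ℕ → S}

theorem SimpleLasso.succ_eq_of_eq (hl : SimpleLasso ρ) {a b : ℕ} (h : ρ a = ρ b) :
    ρ (a + 1) = ρ (b + 1) := by
  obtain ⟨k, ℓ, hℓ, hper, hinj⟩ := hl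
  have hprefix : ∀ i, ∃ j < k + ℓ, ρ j = ρ i ∧ ρ (j + 1) = ρ (i + 1) := by
    intro i
    induction i using Nat.strong_induction_on with
    | _ i ih =>
      by_cases hi : i < k + ℓ
      · exact ⟨i, hi, rfl, rfl⟩
      obtain ⟨j, hj, hji, hji'⟩ := ih (i - ℓ) (by omega)
      refine ⟨j, hj, ?_, ?_⟩
      · rw [hji, ← hper _ (by omega), Nat.sub_add_cancel (by omega)]
      · rw [hji', ← hper _ (by omega), show i - ℓ + 1 + ℓ = i + 1 by omega]
  obtain ⟨a', ha', haa, haa'⟩ := hprefix a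
  obtain ⟨b', hb', hbb, hbb'⟩ := hprefix b
  have : a' = b' := hinj ha' hb' (by rw [haa, hbb, h])
  rw [← haa', ← hbb', this]

theorem engrave_of_imp (hrun : ∀ i, tr (ρ i) (ρ (i + 1))) {C D : Set S} {s t : S}
    (h : Engrave tr ρ C s t) (hCD : s ∈ Set.range ρ → s ∈ C → s ∈ D) : Engrave tr ρ D s t := by
  rcases h with ⟨hst, hfree⟩ | ⟨i, rfl, rfl, -⟩
  · refine Or.inl ⟨hst, fun ⟨hs, hsD⟩ => hfree ⟨hs, fun hsC => hsD (hCD hs hsC)⟩⟩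
  · by_cases hD : ρ i ∈ D
    · exact Or.inl ⟨hrun i, fun h => h.2 hD⟩
    · exact Or.inr ⟨i, rfl, rfl, hD⟩

theorem reflTransGen_engrave_run (hrun : ∀ i, tr (ρ i) (ρ (i + 1))) (D : Set S) (m : ℕ) :
    ReflTransGen (Engrave tr ρ D) (ρ 0) (ρ m) := by
  induction m with
  | zero => exact .refl
  | succ m ih =>
    refine ih.tail (engrave_of_imp hrun (C := ∅) (Or.inr ⟨m, rfl, rfl, Set.notMem_empty _⟩) ?_)
    exact fun _ h => absurd h (Set.notMem_empty _)

theorem engrave_total (htotal : ∀ s, ∃ t, tr s t) (C : Set S) (s : S) :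
    ∃ t, Engrave tr ρ C s t := by
  by_cases hs : s ∈ Set.range ρ ∧ s ∉ C
  · obtain ⟨⟨i, rfl⟩, hC⟩ := hs
    exact ⟨ρ (i + 1), Or.inr ⟨i, rfl, rfl, hC⟩⟩
  · obtain ⟨t, ht⟩ := htotal s
    exact ⟨t, Or.inl ⟨ht, hs⟩⟩

theorem exists_eq_succ_of_engrave {C : Set S} {s t : S} (hs : s ∈ Set.range ρ) (hC : s ∉ C)
    (h : Engrave tr ρ C s t) : ∃ i, ρ i = s ∧ ρ (i + 1) = t := by
  rcases h with ⟨-, hfree⟩ | ⟨i, hi⟩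
  · exact absurd ⟨hs, hC⟩ hfree
  · exact ⟨i, hi.1, hi.2.1⟩

theorem engrave_deterministic (hl : SimpleLasso ρ) {C : Set S} :
    ∀ s ∉ C ∪ {t | t ∉ Set.range ρ}, ∀ t t', Engrave tr ρ C s t → Engrave tr ρ C s t' → t = t' := by
  intro s hs t t' ht ht'
  obtain ⟨hC, hr⟩ := not_or.mp hs
  obtain ⟨i, hi, rfl⟩ := exists_eq_succ_of_engrave (not_not.mp hr) hC ht
  obtain ⟨j, hj, rfl⟩ := exists_eq_succ_of_engrave (not_not.mp hr) hC ht'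
  exact hl.succ_eq_of_eq (hi.trans hj.symm)

theorem mem_range_of_reflTransGen_engrave_empty {s f : S}
    (h : ReflTransGen (Engrave tr ρ ∅) s f) (hs : s ∈ Set.range ρ) : f ∈ Set.range ρ := by
  induction h with
  | refl => exact hs
  | tail _ hstep ih =>
    obtain ⟨i, -, rfl⟩ := exists_eq_succ_of_engrave ih (Set.notMem_empty _) hstep
    exact ⟨i + 1, rfl⟩

theorem reflTransGen_engrave_split (hrun : ∀ i, tr (ρ i) (ρ (i + 1))) {C : Set S} {a f : S}
    (h : ReflTransGen (Engrave tr ρ C) a f) :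
    ReflTransGen (Engrave tr ρ ∅) a f ∨
      ∃ s ∈ C, s ∈ Set.range ρ ∧ ReflTransGen (Engrave tr ρ {s}) s f := by
  induction h using ReflTransGen.head_induction_on with
  | refl => exact Or.inl .refl
  | @head a c hac _ ih =>
    refine ih.elim (fun hcf => ?_) Or.inr
    by_cases ha : a ∈ Set.range ρ ∧ a ∈ C
    · refine Or.inr ⟨a, ha.2, ha.1, .head (engrave_of_imp hrun hac fun _ _ => rfl) ?_⟩
      exact ReflTransGen.mono
        (fun _ _ hxy => engrave_of_imp hrun hxy fun _ h => absurd h (Set.notMem_empty _)) _ _ hcf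
    · exact Or.inl (.head (engrave_of_imp hrun hac fun hr hC => absurd ⟨hr, hC⟩ ha) hcf)

theorem exists_reflTransGen_engrave_iff_exists_singleton (hrun : ∀ i, tr (ρ i) (ρ (i + 1)))
    {F : Set S} (hviol : ∀ i, ρ i ∉ F) (C : Set S) :
    (∃ f ∈ F, ReflTransGen (Engrave tr ρ C) (ρ 0) f) ↔
      ∃ s ∈ C, ∃ f ∈ F, ReflTransGen (Engrave tr ρ {s}) (ρ 0) f := by
  constructor
  · rintro ⟨f, hf, h⟩
    rcases reflTransGen_engrave_split hrun h with h₀ | ⟨s, hsC, ⟨m, rfl⟩, hsf⟩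
    · obtain ⟨i, rfl⟩ := mem_range_of_reflTransGen_engrave_empty h₀ ⟨0, rfl⟩
      exact absurd hf (hviol i)
    · exact ⟨ρ m, hsC, f, hf, (reflTransGen_engrave_run hrun _ m).trans hsf⟩
  · rintro ⟨s, hsC, f, hf, h⟩
    refine ⟨f, hf, ReflTransGen.mono (fun _ _ hxy => engrave_of_imp hrun hxy fun _ hx => ?_) _ _ h⟩
    exact (Set.mem_singleton_iff.mp hx) ▸ hsC

end Engraving

/-- For reachability objectives, all states with positive optimistic backward
responsibility have the same responsibility value: there is a rational `r ∈ [0,1]`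
such that every state's responsibility lies in `{0, r}`. -/
theorem reach_optimistic_responsibility_two_valued {S : Type*} [Fintype S] [DecidableEq S]
    (tr : S → S → Prop) (htotal : ∀ s, ∃ t, tr s t)
    (init : S) (F : Set S) (ρ : ℕ → S)
    (hrun0 : ρ 0 = init) (hrun : ∀ i, tr (ρ i) (ρ (i + 1)))
    (hlasso : SimpleLasso ρ) (hviol : ∀ i, ρ i ∉ F)
    (γ : Finset S → ℚ)
    (hγ : ∀ C : Finset S,
      (γ C = 1 ↔
        Wins (Engrave tr ρ (↑C : Set S)) ((↑C : Set S) ∪ {t | t ∉ Set.range ρ})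
          (ReachObj F) init) ∧
      (γ C = 0 ∨ γ C = 1)) :
    ∃ r : ℚ, 0 ≤ r ∧ r ≤ 1 ∧ ∀ s : S, shapley γ s = 0 ∨ shapley γ s = r := by
  subst hrun0
  have hreach : ∀ C : Finset S, γ C = 1 ↔ ∃ f ∈ F, ReflTransGen (Engrave tr ρ C) (ρ 0) f :=
    fun C => (hγ C).1.trans <|
      wins_reachObj_iff_reflTransGen (engrave_total htotal _) (engrave_deterministic hlasso)
  refine exists_shapley_eq_zero_or_eq_of_iff_exists_singleton (fun C => (hγ C).2) fun C => ?_
  simpa only [hreach, coe_singleton, mem_coe] using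
    exists_reflTransGen_engrave_iff_exists_singleton hrun hviol (C : Set S)
end

section
/- For a safety objective, if (B, C) is a block-switching pair then the frontier Fr(B, C)—the set of states s ∈ B ∩ Δ with a transition to some state outside Δ, where Δ = Win(G[C ∪ B]) \ Win(G[C])—is nonempty. -/
/-- Player Sat's winning region when controlling the states in `C`. -/
def WinSet {S : Type*} (tr : S → S → Prop) (C : Set S) (Ω : (ℕ → S) → Prop) : Set S :=
  {s | Wins tr C Ω s}

/-- `Δ = Win(G[C ∪ B]) \ Win(G[C])`. -/
def Delta {S : Type*} (tr : S → S → Prop) (Ω : (ℕ → S) → Prop) (C B : Set S) : Set S :=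
  WinSet tr (C ∪ B) Ω \ WinSet tr C Ω

/-- The frontier `Fr(B, C)`: states of `B ∩ Δ` with a transition leaving `Δ`. -/
def Frontier {S : Type*} (tr : S → S → Prop) (Ω : (ℕ → S) → Prop) (C B : Set S) : Set S :=
  {s | s ∈ Delta tr Ω C B ∩ B ∧ ∃ t, tr s t ∧ t ∉ Delta tr Ω C B}

section Aux

variable {S : Type*} {tr : S → S → Prop} {F : Set S}

lemma safe_notMem {C' : Set S} {s : S} (h : Wins tr C' (SafetyObj F) s) : s ∉ F := by
  obtain ⟨σ, hσ, hw⟩ := h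
  have := hw (fun n => σ^[n] s) rfl (fun i => by
    simp only [Function.iterate_succ_apply']
    exact ⟨hσ _, fun _ => trivial⟩)
  exact this 0

lemma wins_mono {C' D : Set S} {Ω : (ℕ → S) → Prop} (hCD : C' ⊆ D) {s : S}
    (h : Wins tr C' Ω s) : Wins tr D Ω s := by
  obtain ⟨σ, hσ, hw⟩ := h
  exact ⟨σ, hσ, fun π h0 hc => hw π h0 (fun i => ⟨(hc i).1, fun hs => (hc i).2 (hCD hs)⟩)⟩

lemma wins_step {C' : Set S} {s t : S} (σ : S → S) (hσ : ∀ s, tr s (σ s))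
    (hw : ∀ π : ℕ → S, π 0 = s →
      (∀ i, tr (π i) (π (i + 1)) ∧ (π i ∈ C' → π (i + 1) = σ (π i))) → SafetyObj F π)
    (ht : tr s t) (htc : s ∈ C' → t = σ s) : Wins tr C' (SafetyObj F) t := by
  refine ⟨σ, hσ, fun π h0 hc i => ?_⟩
  set π' : ℕ → S := fun n => Nat.rec s (fun m _ => π m) n with hπ'
  have key := hw π' rfl (fun j => by
    cases j with
    | zero =>
      refine ⟨?_, fun hs => ?_⟩
      · show tr s (π 0); rw [h0]; exact ht
      · show π 0 = σ s; rw [h0]; exact htc hs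
    | succ k => exact hc k)
  exact key (i + 1)

end Aux

/-- For safety objectives, the frontier of a block-switching pair is nonempty. -/
theorem frontier_nonempty_safety {S : Type*} [Fintype S]
    (tr : S → S → Prop) (htotal : ∀ s, ∃ t, tr s t)
    (F : Set S) (init : S)
    (hreach : ∃ (π : ℕ → S) (n : ℕ), π 0 = init ∧ (∀ i, tr (π i) (π (i + 1))) ∧ π n ∈ F)
    (B C : Set S)
    (hwin : Wins tr (C ∪ B) (SafetyObj F) init)
    (hlose : ¬Wins tr C (SafetyObj F) init) :
    (Frontier tr (SafetyObj F) C B).Nonempty := by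
  classical
  by_contra hne
  rw [Set.not_nonempty_iff_eq_empty] at hne
  apply hlose
  let σ' : S → S := fun s =>
    if h1 : Wins tr C (SafetyObj F) s then Classical.choose h1 s
    else if h2 : Wins tr (C ∪ B) (SafetyObj F) s then Classical.choose h2 s
    else Classical.choose (htotal s)
  have hσ' : ∀ s, tr s (σ' s) := by
    intro s
    simp only [σ']
    split_ifs with h1 h2
    · exact (Classical.choose_spec h1).1 s
    · exact (Classical.choose_spec h2).1 s
    · exact Classical.choose_spec (htotal s)
  refine ⟨σ', hσ', fun π h0 hc => ?_⟩
  have key : ∀ i, Wins tr (C ∪ B) (SafetyObj F) (π i) := by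
    intro i
    induction i with
    | zero => rw [h0]; exact hwin
    | succ n ih =>
      by_cases h1 : Wins tr C (SafetyObj F) (π n)
      · have hτ := Classical.choose_spec h1
        have hcond : π n ∈ C → π (n + 1) = Classical.choose h1 (π n) := by
          intro hsC
          have h2 := (hc n).2 hsC
          simp only [σ', dif_pos h1] at h2
          exact h2
        exact wins_mono Set.subset_union_left
          (wins_step (Classical.choose h1) hτ.1 hτ.2 (hc n).1 hcond)
      · have hΔ : π n ∈ Delta tr (SafetyObj F) C B := ⟨ih, h1⟩
        by_cases hsC : π n ∈ C
        · have hτ := Classical.choose_spec ih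
          have hcond : π (n + 1) = Classical.choose ih (π n) := by
            have h2 := (hc n).2 hsC
            simp only [σ', dif_neg h1, dif_pos ih] at h2
            exact h2
          exact wins_step (Classical.choose ih) hτ.1 hτ.2 (hc n).1 (fun _ => hcond)
        · by_cases hsB : π n ∈ B
          · have hfr : π n ∉ Frontier tr (SafetyObj F) C B := by
              rw [hne]; exact Set.notMem_empty _
            have hmem : π (n + 1) ∈ Delta tr (SafetyObj F) C B := by
              by_contra ht
              exact hfr ⟨⟨hΔ, hsB⟩, π (n + 1), (hc n).1, ht⟩
            exact hmem.1
          · have hτ := Classical.choose_spec ih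
            exact wins_step (Classical.choose ih) hτ.1 hτ.2 (hc n).1
              (fun hs => absurd hs (by simp only [Set.mem_union]; exact fun h => h.elim hsC hsB))
  intro i
  exact safe_notMem (key i)
end
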